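/- Let α = (√5 - 1)/2 and let β be the unique real number in (0,1) with 1 - β - β² + β³ - β⁴ = 0. Let n ≥ 0 be a natural number and suppose β^(2^(-n)) < q < α^(2^(-n-1)). Then t_N · S_N(q) < 0 for all N with 1 ≤ N < 3·2^(n+1), while t_M · S_M(q) > 0 for M = 3·2^(n+1). -/

import Mathlib

/-!
Write `T_k(q) = t_k S_k(q)`. Splitting `S_{2k}` into even and odd terms gives
`T_{2k}(q) = (1 - q) T_k(q²)` and `T_{2k+1}(q) = -(1 - q) T_k(q²) - q^{2k}`. Hence, for
`1/2 < q < 1`, the bounds `-q^{2k} < (1 - q) T_k(q²) < 0` for `1 ≤ k < M` imply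
`-q^k < (1 - q) T_k(q) < 0` for `1 ≤ k < 2M`, and the sign of `T_M(q²)` passes to `T_{2M}(q)`.
Squaring maps the `(n+1)`-st interval `(β^{2^{-n-1}}, α^{2^{-n-2}})` into the `n`-th one, and
`1 - q < 1 - q²` lets the conclusion at `q²` serve as hypothesis at `q`. The induction starts from
`M = 3` at `q² ∈ (β², α)`, where everything comes down to `1 - q - q² < 0` and
`1 - q - q² + q³ - q⁴ < 0` (as `q > β`, the quartic being decreasing on `[0, 1]`) and
`T_3(q²) = 1 - q² - q⁴ > 0` (as `q² < α`).
-/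

/-- The Thue-Morse sequence: `tm n = (-1)^(s₂ n)` where `s₂ n` is the sum of the
binary digits of `n`. -/
def tm (n : ℕ) : ℤ := (-1) ^ (Nat.digits 2 n).sum

/-- The partial sums `S q n = ∑_{0 ≤ j < n} tm j * q^j`. -/
noncomputable def S (q : ℝ) (n : ℕ) : ℝ := ∑ j ∈ Finset.range n, (tm j : ℝ) * q ^ j

open Real

lemma tm_two_mul (k : ℕ) : tm (2 * k) = tm k := by
  rcases Nat.eq_zero_or_pos k with rfl | hk
  · rfl
  · rw [tm, Nat.digits_def' (by norm_num) (by omega)]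
    simp [tm]

lemma tm_two_mul_add_one (k : ℕ) : tm (2 * k + 1) = -tm k := by
  rw [tm, Nat.digits_def' (by norm_num) (by omega)]
  simp [tm, Nat.mul_add_div, pow_add]

lemma tm_mul_self (k : ℕ) : tm k * tm k = 1 := by
  simp [tm, ← pow_add, ← two_mul, pow_mul]

lemma S_two_mul (q : ℝ) (k : ℕ) : S q (2 * k) = (1 - q) * S (q ^ 2) k := by
  induction k with
  | zero => simp [S]
  | succ k ih =>
    rw [S, Nat.mul_succ, Finset.sum_range_succ, Finset.sum_range_succ, ← S, ih, S, S,
      Finset.sum_range_succ, tm_two_mul, tm_two_mul_add_one]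
    push_cast
    ring

lemma S_two_mul_add_one (q : ℝ) (k : ℕ) :
    S q (2 * k + 1) = (1 - q) * S (q ^ 2) k + tm k * q ^ (2 * k) := by
  rw [S, Finset.sum_range_succ, ← S, S_two_mul, tm_two_mul]

lemma tm_mul_S_two_mul (q : ℝ) (k : ℕ) :
    tm (2 * k) * S q (2 * k) = (1 - q) * (tm k * S (q ^ 2) k) := by
  rw [tm_two_mul, S_two_mul]
  ring

lemma tm_mul_S_two_mul_add_one (q : ℝ) (k : ℕ) :
    tm (2 * k + 1) * S q (2 * k + 1) = -((1 - q) * (tm k * S (q ^ 2) k)) - q ^ (2 * k) := by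
  have h : (tm k : ℝ) * tm k = 1 := by exact_mod_cast tm_mul_self k
  rw [tm_two_mul_add_one, S_two_mul_add_one]
  push_cast
  linear_combination -q ^ (2 * k) * h

def SignedSumsBounded (q c : ℝ) (M : ℕ) : Prop :=
  ∀ k, 1 ≤ k → k < M → (tm k : ℝ) * S q k < 0 ∧ -q ^ k < c * (tm k * S q k)

namespace SignedSumsBounded

variable {q c : ℝ} {M : ℕ}

lemma of_le {c' : ℝ} (h : SignedSumsBounded q c M) (hc : c' ≤ c) :
    SignedSumsBounded q c' M := fun k hk hkM => by
  obtain ⟨hneg, hbound⟩ := h k hk hkM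
  exact ⟨hneg, hbound.trans_le (mul_le_mul_of_nonpos_right hc hneg.le)⟩

lemma of_sq (hq : 1 / 2 < q) (hq1 : q < 1) (h : SignedSumsBounded (q ^ 2) (1 - q) M) :
    SignedSumsBounded q (1 - q) (2 * M) := by
  intro k hk hkM
  have hqk : ∀ j : ℕ, 0 < q ^ j := fun j => pow_pos (by linarith) j
  obtain ⟨j, rfl | rfl⟩ := Nat.even_or_odd' k
  · obtain ⟨hneg, hbound⟩ := h j (by omega) (by omega)
    rw [← pow_mul] at hbound
    rw [tm_mul_S_two_mul]
    constructor
    · exact mul_neg_of_pos_of_neg (by linarith) hneg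
    · nlinarith [hqk (2 * j)]
  · rw [tm_mul_S_two_mul_add_one, pow_succ q (2 * j)]
    rcases Nat.eq_zero_or_pos j with rfl | hj
    · simp only [S, Finset.range_zero, Finset.sum_empty, mul_zero, neg_zero, pow_zero]
      constructor <;> linarith
    obtain ⟨hneg, hbound⟩ := h j hj (by omega)
    rw [← pow_mul] at hbound
    constructor
    · nlinarith [hqk (2 * j)]
    · nlinarith [hqk (2 * j)]

lemma of_sq_and_pos (hq : 1 / 2 < q) (hq1 : q < 1) (h : SignedSumsBounded (q ^ 2) (1 - q) M)
    (hM : 0 < (tm M : ℝ) * S (q ^ 2) M) :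
    SignedSumsBounded q (1 - q) (2 * M) ∧ 0 < (tm (2 * M) : ℝ) * S q (2 * M) := by
  rw [tm_mul_S_two_mul]
  exact ⟨h.of_sq hq hq1, mul_pos (by linarith) hM⟩

end SignedSumsBounded

lemma signedSumsBounded_sq_three {q : ℝ} (hq0 : 0 < q) (hq1 : q < 1)
    (hf : 1 - q - q ^ 2 + q ^ 3 - q ^ 4 < 0) : SignedSumsBounded (q ^ 2) (1 - q) 3 := by
  have hgold : 1 < q + q ^ 2 := by nlinarith [mul_pos (pow_pos hq0 3) (sub_pos.2 hq1)]
  intro k hk hk3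
  interval_cases k <;> refine ⟨?_, ?_⟩ <;>
    norm_num [S, Finset.sum_range_succ, tm, abs_of_pos hq0] <;> nlinarith

lemma strictAntiOn_quartic :
    StrictAntiOn (fun x : ℝ => 1 - x - x ^ 2 + x ^ 3 - x ^ 4) (Set.Icc 0 1) := by
  rintro x ⟨hx0, hx1⟩ y ⟨hy0, hy1⟩ hxy
  have hprod : (1 - y) * (1 - y ^ 2) ≤ (1 - x) * (1 - x ^ 2) := by
    gcongr
    nlinarith
  have hpow : x ^ 4 < y ^ 4 := by gcongr
  linear_combination hprod + hpow

lemma quartic_neg_of_root_lt {β q : ℝ} (hβ0 : 0 ≤ β) (hβ : 1 - β - β ^ 2 + β ^ 3 - β ^ 4 = 0)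
    (hβq : β < q) (hq1 : q ≤ 1) : 1 - q - q ^ 2 + q ^ 3 - q ^ 4 < 0 :=
  hβ ▸ strictAntiOn_quartic ⟨hβ0, by linarith⟩ ⟨by linarith, hq1⟩ hβq

lemma half_lt_of_quartic_neg {q : ℝ} (hq0 : 0 ≤ q) (hf : 1 - q - q ^ 2 + q ^ 3 - q ^ 4 < 0) :
    1 / 2 < q := by
  by_contra! h
  have := strictAntiOn_quartic.antitoneOn ⟨hq0, by linarith⟩ ⟨by norm_num, by norm_num⟩ h
  norm_num at this
  linarith

lemma signedSumsBounded_six {q : ℝ} (hq0 : 0 < q) (hq1 : q < 1)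
    (hf : 1 - q - q ^ 2 + q ^ 3 - q ^ 4 < 0) (hq : q ^ 2 + q ^ 4 < 1) :
    SignedSumsBounded q (1 - q) 6 ∧ 0 < (tm 6 : ℝ) * S q 6 := by
  refine SignedSumsBounded.of_sq_and_pos (half_lt_of_quartic_neg hq0.le hf) hq1
    (signedSumsBounded_sq_three hq0 hq1 hf) ?_
  norm_num [S, Finset.sum_range_succ, tm]
  linarith

lemma sq_rpow_two_zpow_sub_one {x : ℝ} (hx : 0 ≤ x) (m : ℤ) :
    (x ^ (2 : ℝ) ^ (m - 1)) ^ 2 = x ^ (2 : ℝ) ^ m := by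
  rw [← rpow_natCast, ← rpow_mul hx, zpow_sub_one₀ two_ne_zero]
  congr 1
  push_cast
  ring

lemma golden_conj_add_sq : (√5 - 1) / 2 + ((√5 - 1) / 2) ^ 2 = 1 := by
  linear_combination Real.sq_sqrt (show (0 : ℝ) ≤ 5 by norm_num) / 4

lemma golden_conj_pos : 0 < (√5 - 1) / 2 := by
  have : 1 < √5 := Real.lt_sqrt_of_sq_lt (by norm_num)
  linarith

lemma golden_conj_lt_one : (√5 - 1) / 2 < 1 := by
  nlinarith [golden_conj_add_sq, golden_conj_pos]

def signInterval (β : ℝ) (n : ℕ) : Set ℝ :=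
  Set.Ioo (β ^ (2 : ℝ) ^ (-(n : ℤ))) (((√5 - 1) / 2) ^ (2 : ℝ) ^ (-(n : ℤ) - 1))

section signInterval

variable {β q : ℝ} {n : ℕ}

lemma sq_mem_signInterval (hβ0 : 0 ≤ β) (hq : q ∈ signInterval β (n + 1)) :
    q ^ 2 ∈ signInterval β n := by
  obtain ⟨hlo, hhi⟩ := hq
  have hq0 : 0 ≤ q := (rpow_nonneg hβ0 _).trans hlo.le
  have hn : -((n + 1 : ℕ) : ℤ) = -(n : ℤ) - 1 := by push_cast; ring
  rw [hn] at hlo hhi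
  constructor
  · rw [← sq_rpow_two_zpow_sub_one hβ0]
    gcongr
  · rw [← sq_rpow_two_zpow_sub_one golden_conj_pos.le]
    gcongr

lemma sq_add_pow_four_lt_one_of_mem_signInterval_zero (hβ0 : 0 ≤ β)
    (hq : q ∈ signInterval β 0) : q ^ 2 + q ^ 4 < 1 := by
  obtain ⟨hlo, hhi⟩ := hq
  have hq0 : 0 ≤ q := (rpow_nonneg hβ0 _).trans hlo.le
  have hsq : q ^ 2 < (√5 - 1) / 2 := by
    have := sq_rpow_two_zpow_sub_one golden_conj_pos.le 0
    simp only [zpow_zero, rpow_one] at this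
    rw [← this]
    simp only [Nat.cast_zero, neg_zero] at hhi
    gcongr
  nlinarith [golden_conj_add_sq]

lemma bounds_of_mem_signInterval (hβ0 : 0 < β) (hβ1 : β < 1)
    (hβ : 1 - β - β ^ 2 + β ^ 3 - β ^ 4 = 0) (hq : q ∈ signInterval β n) :
    1 / 2 < q ∧ q < 1 ∧ 1 - q - q ^ 2 + q ^ 3 - q ^ 4 < 0 := by
  obtain ⟨hlo, hhi⟩ := hq
  have hβq : β < q :=
    (self_le_rpow_of_le_one hβ0.le hβ1.le (zpow_le_one_of_nonpos₀ one_le_two (by omega))).trans_lt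
      hlo
  have hq1 : q < 1 :=
    hhi.trans (rpow_lt_one golden_conj_pos.le golden_conj_lt_one (by positivity))
  have hf := quartic_neg_of_root_lt hβ0.le hβ hβq hq1.le
  exact ⟨half_lt_of_quartic_neg (by linarith) hf, hq1, hf⟩

end signInterval

lemma signedSumsBounded_of_mem_signInterval {β : ℝ} (hβ0 : 0 < β) (hβ1 : β < 1)
    (hβ : 1 - β - β ^ 2 + β ^ 3 - β ^ 4 = 0) {n : ℕ} {q : ℝ} (hq : q ∈ signInterval β n) :
    SignedSumsBounded q (1 - q) (3 * 2 ^ (n + 1)) ∧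
      0 < (tm (3 * 2 ^ (n + 1)) : ℝ) * S q (3 * 2 ^ (n + 1)) := by
  induction n generalizing q with
  | zero =>
    obtain ⟨hhalf, hq1, hf⟩ := bounds_of_mem_signInterval hβ0 hβ1 hβ hq
    exact signedSumsBounded_six (by linarith) hq1 hf
      (sq_add_pow_four_lt_one_of_mem_signInterval_zero hβ0.le hq)
  | succ n ih =>
    obtain ⟨hhalf, hq1, -⟩ := bounds_of_mem_signInterval hβ0 hβ1 hβ hq
    obtain ⟨hsum, hpos⟩ := ih (sq_mem_signInterval hβ0.le hq)
    rw [show 3 * 2 ^ (n + 1 + 1) = 2 * (3 * 2 ^ (n + 1)) by ring]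
    exact SignedSumsBounded.of_sq_and_pos hhalf hq1 (hsum.of_le (by nlinarith)) hpos

theorem main_sign_three (β : ℝ) (hβ0 : 0 < β) (hβ1 : β < 1)
    (hβ : 1 - β - β ^ 2 + β ^ 3 - β ^ 4 = 0)
    (n : ℕ) (q : ℝ)
    (hq0 : β ^ ((2 : ℝ) ^ (-(n : ℤ))) < q)
    (hq1 : q < ((Real.sqrt 5 - 1) / 2) ^ ((2 : ℝ) ^ (-(n : ℤ) - 1))) :
    (∀ N : ℕ, 1 ≤ N → N < 3 * 2 ^ (n + 1) → (tm N : ℝ) * S q N < 0) ∧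
      0 < (tm (3 * 2 ^ (n + 1)) : ℝ) * S q (3 * 2 ^ (n + 1)) := by
  obtain ⟨hsum, hpos⟩ := signedSumsBounded_of_mem_signInterval hβ0 hβ1 hβ ⟨hq0, hq1⟩
  exact ⟨fun N hN hNM => (hsum N hN hNM).1, hpos⟩
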